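/- arXiv:2108.00191 — 7 statements merged into one kernel-verified Lean document; each statement's English description precedes it below -/
import Mathlib

section
/- For all positive integers n and m, the partition function satisfies p(n) ≥ Σ_{k=1}^{m} (1/k!) · C(n-1, k-1), where C denotes the binomial coefficient. -/
/-!
Reading a subset of `{1, …, n - 1}` of size `k - 1` as the set of cut points of `n` gives the
`(n - 1).choose (k - 1)` compositions of `n` into `k` parts. Forgetting the order of the parts
maps them onto the partitions of `n` into `k` parts, and each such partition comes from at most
`k!` orderings of its parts, so there are at least `(n - 1).choose (k - 1) / k!` of them.
Summing over `k ≤ m` counts each partition of `n` at most once.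
-/

open Finset Nat

/-- Partition function: number of partitions of n. -/
def partcount (n : ℕ) : ℕ := Fintype.card (Nat.Partition n)

theorem CompositionAsSet.boundaries_compositionAsSetEquiv_symm (m : ℕ) (s : Finset (Fin m)) :
    ((compositionAsSetEquiv (m + 1)).symm s).boundaries =
      cons 0 (cons (Fin.last (m + 1)) (s.map ((Fin.succEmb m).trans Fin.castSuccEmb))
        (by simp [Fin.ext_iff]; omega)) (by simp [Fin.ext_iff]) := by
  ext i
  simp only [compositionAsSetEquiv, Equiv.coe_fn_symm_mk, Set.mem_toFinset, Set.mem_ofPred_eq,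
    mem_cons, mem_map, Function.Embedding.trans_apply, Fin.castSuccEmb_apply, Fin.coe_succEmb,
    Fin.ext_iff, Fin.val_castSucc, Fin.val_succ, exists_prop, eq_comm]
  -- the two sides differ only in `Fin (m + 1 - 1)` versus `Fin m`
  rfl

theorem CompositionAsSet.length_compositionAsSetEquiv_symm {n : ℕ} (hn : 0 < n)
    (s : Finset (Fin (n - 1))) : ((compositionAsSetEquiv n).symm s).length = #s + 1 := by
  obtain ⟨m, rfl⟩ := Nat.exists_eq_add_of_lt hn
  rw [CompositionAsSet.length, boundaries_compositionAsSetEquiv_symm, card_cons, card_cons,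
    card_map]
  rfl

theorem Composition.card_filter_length_eq {n : ℕ} (hn : 0 < n) (k : ℕ) :
    #{c : Composition n | c.length = k + 1} = (n - 1).choose k := by
  let e := (compositionEquiv n).trans (compositionAsSetEquiv n)
  have length_eq (c : Composition n) : c.length = #(e c) + 1 := by
    rw [← CompositionAsSet.length_compositionAsSetEquiv_symm hn]
    simp [e, compositionEquiv]
  rw [← Fintype.card_fin (n - 1), ← Finset.card_univ, ← card_powersetCard]
  exact card_equiv e fun c => by simp [length_eq, mem_powersetCard]

theorem Nat.Partition.card_ofComposition_fiber_le {n : ℕ} (P : n.Partition) :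
    #{c : Composition n | Partition.ofComposition n c = P} ≤ (Multiset.card P.parts)! := by
  calc #{c : Composition n | Partition.ofComposition n c = P}
      ≤ #P.parts.toList.permutations.toFinset := by
        refine card_le_card_of_injOn Composition.blocks (fun c hc => ?_)
          fun c _ d _ h => Composition.ext h
        simp only [coe_filter, mem_univ, true_and, Set.mem_ofPred_eq] at hc
        rw [mem_coe, List.mem_toFinset, List.mem_permutations, ← Multiset.coe_eq_coe,
          Multiset.coe_toList, ← hc, Partition.ofComposition_parts]
    _ ≤ P.parts.toList.permutations.length := List.toFinset_card_le _
    _ = (Multiset.card P.parts)! := by rw [List.length_permutations, Multiset.length_toList]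

theorem Composition.card_filter_length_le_factorial_mul (n k : ℕ) :
    #{c : Composition n | c.length = k} ≤
      k ! * #{P : n.Partition | Multiset.card P.parts = k} := by
  refine card_le_mul_card_image_of_maps_to (f := Partition.ofComposition n) (fun c hc => ?_) _
    fun P hP => ?_
  · simpa using hc
  · rw [mem_filter_univ] at hP
    rw [filter_filter, ← hP]
    exact (card_le_card (monotone_filter_right _ fun c _ h => h.2)).trans
      P.card_ofComposition_fiber_le

theorem Nat.Partition.choose_le_factorial_mul_card_filter {n k : ℕ} (hn : 0 < n) (hk : 0 < k) :
    (n - 1).choose (k - 1) ≤ k ! * #{P : n.Partition | Multiset.card P.parts = k} := by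
  rw [← Composition.card_filter_length_eq hn, Nat.sub_add_cancel hk]
  exact Composition.card_filter_length_le_factorial_mul n k

theorem Nat.Partition.sum_card_filter_card_parts_le (n : ℕ) (s : Finset ℕ) :
    ∑ k ∈ s, #{P : n.Partition | Multiset.card P.parts = k} ≤ Fintype.card n.Partition := by
  rw [sum_card_fiberwise_eq_card_filter]
  exact card_le_univ _

theorem partition_lower_bound_general (n m : ℕ) (hn : 0 < n) :
    (partcount n : ℝ) ≥
      ∑ k ∈ Finset.Icc 1 m, (1 / (Nat.factorial k : ℝ)) * (Nat.choose (n - 1) (k - 1)) := by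
  calc ∑ k ∈ Icc 1 m, (1 / (k ! : ℝ)) * ((n - 1).choose (k - 1))
      ≤ ∑ k ∈ Icc 1 m, (#{P : n.Partition | Multiset.card P.parts = k} : ℝ) :=
        sum_le_sum fun k hk => by
          rw [one_div, inv_mul_le_iff₀ (by positivity)]
          exact_mod_cast Partition.choose_le_factorial_mul_card_filter hn (mem_Icc.1 hk).1
    _ ≤ partcount n := by exact_mod_cast Partition.sum_card_filter_card_parts_le n _

theorem partition_lower_bound (n m : ℕ) (hn : 0 < n) (hm : 0 < m) :
    (partcount n : ℝ) ≥
      ∑ k ∈ Finset.Icc 1 m, (1 / (Nat.factorial k : ℝ)) * (Nat.choose (n - 1) (k - 1)) :=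
  partition_lower_bound_general n m hn
end

section
/- For all integers a, b ≥ 2 with a + b ≥ 10, the partition function satisfies p(a) · p(b) > p(a+b). -/
def c (k n : ℕ) : ℕ :=
  if n = 0 then 1
  else if k = 0 then 0
  else if k ≤ n then c (k+1) n + c k (n-k)
  else 0
termination_by (n, n + 1 - k)
decreasing_by
  · apply Prod.Lex.right; omega
  · apply Prod.Lex.left; omega

lemma c_zero (k : ℕ) : c k 0 = 1 := by rw [c]; simp

lemma c_of_lt {k n : ℕ} (h1 : 0 < n) (h2 : n < k) : c k n = 0 := by
  rw [c]; rw [if_neg (by omega), if_neg (by omega), if_neg (by omega)]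

lemma c_rec {k n : ℕ} (hk : 0 < k) (hn : k ≤ n) :
    c k n = c (k+1) n + c k (n-k) := by
  rw [c]; rw [if_neg (by omega), if_neg (by omega), if_pos hn]

lemma c_one {k n : ℕ} (hk : 0 < k) (h1 : k ≤ n) (h2 : n < 2*k) : c k n = 1 := by
  rw [c_rec hk h1]
  rcases Nat.eq_or_lt_of_le h1 with h | h
  · rw [← h, Nat.sub_self, c_zero, c_of_lt (k := k+1) (by omega) (by omega)]
  · rw [c_one (k := k+1) (by omega) (by omega) (by omega),
        c_of_lt (k := k) (n := n - k) (by omega) (by omega)]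
termination_by (n, n + 1 - k)
decreasing_by
  apply Prod.Lex.right; omega

lemma c_pos {k n : ℕ} (hk : 0 < k) (hn : k ≤ n) : 1 ≤ c k n := by
  rcases Nat.lt_or_ge n (2*k) with h | h
  · rw [c_one hk hn h]
  · rw [c_rec hk hn]
    have := c_pos (k := k) (n := n - k) hk (by omega)
    omega
termination_by (n, n + 1 - k)
decreasing_by
  apply Prod.Lex.left; omega

lemma c_mono {k n : ℕ} (hk : 0 < k) (hn : 0 < n) : c k n ≤ c k (n+1) := by
  rcases lt_or_ge n k with h | h
  · rw [c_of_lt hn h]; exact Nat.zero_le _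
  · rcases Nat.eq_or_lt_of_le h with h' | h'
    · have e1 : c k n = 1 := c_one hk h (by omega)
      rw [e1]; exact c_pos hk (by omega)
    · have l : c k n = c (k+1) n + c k (n-k) := c_rec hk h
      have r : c k (n+1) = c (k+1) (n+1) + c k ((n-k)+1) := by
        rw [c_rec hk (by omega)]; congr 1; congr 1; omega
      rw [l, r]
      exact Nat.add_le_add (c_mono (by omega) hn) (c_mono hk (by omega))
termination_by (n, n + 1 - k)
decreasing_by
  · apply Prod.Lex.right; omega
  · apply Prod.Lex.left; omega

lemma c_mono' {k j x : ℕ} (hk : 0 < k) (hj : 0 < j) (hjx : j ≤ x) : c k j ≤ c k x := by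
  induction x with
  | zero => exact absurd hjx (by omega)
  | succ m ih =>
    rcases Nat.lt_or_ge j (m+1) with h | h
    · exact le_trans (ih (by omega)) (c_mono hk (by omega))
    · have : j = m + 1 := by omega
      rw [this]

lemma c_anti {k n : ℕ} (hk : 0 < k) : c (k+1) n ≤ c k n := by
  rcases Nat.eq_zero_or_pos n with h | h
  · subst h; rw [c_zero, c_zero]
  · rcases Nat.lt_or_ge n k with h2 | h2
    · rw [c_of_lt h h2, c_of_lt h (by omega)]
    · rw [c_rec hk h2]; omega

lemma c_two {k n : ℕ} (hk : 2 ≤ k) (h1 : 2*k ≤ n) (h2 : n ≤ 2*k+1) : c k n = 2 := by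
  rw [c_rec (by omega) (by omega)]
  rw [c_one (k := k+1) (by omega) (by omega) (by omega)]
  rw [c_one (k := k) (n := n - k) (by omega) (by omega) (by omega)]

lemma c_three {k : ℕ} (hk : 3 ≤ k) : c k (2*k+2) = 3 := by
  rw [c_rec (by omega) (by omega)]
  rw [c_two (k := k+1) (by omega) (by omega) (by omega)]
  rw [c_one (k := k) (n := 2*k+2-k) (by omega) (by omega) (by omega)]

lemma c_sh {k N : ℕ} (hk : 2 ≤ k) (hN : k + 2 ≤ N) : c (k+1) N ≤ c k (N-2) := by
  rcases Nat.lt_or_ge N (2*k+2) with h | h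
  · rw [c_one (k := k+1) (by omega) (by omega) (by omega)]
    exact c_pos (by omega) (by omega)
  · have l : c (k+1) N = c (k+2) N + c (k+1) (N-(k+1)) := c_rec (by omega) (by omega)
    have r : c k (N-2) = c (k+1) (N-2) + c k (N-2-k) := c_rec (by omega) (by omega)
    have t1 : c (k+2) N ≤ c (k+1) (N-2) := c_sh (k := k+1) (by omega) (by omega)
    have t2 : c (k+1) (N-(k+1)) ≤ c k (N-2-k) := by
      rcases Nat.lt_or_ge N (2*k+4) with h2 | h2
      · -- N = 2k+2 or 2k+3
        have e1 : c (k+1) (N-(k+1)) = 1 :=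
          c_one (by omega) (by omega) (by omega)
        rw [e1]; exact c_pos (by omega) (by omega)
      · have s1 : c (k+1) (N-(k+1)) ≤ c k (N-(k+1)-2) := c_sh (k := k) (by omega) (by omega)
        refine le_trans s1 (c_mono' (by omega) (by omega) (by omega))
    omega
termination_by (N, N + 1 - k)
decreasing_by
  · apply Prod.Lex.right; omega
  · apply Prod.Lex.left; omega

lemma c_bnd2 {M : ℕ} (h : 7 ≤ M) : c 2 M ≤ c 1 (M-3) := by
  rcases Nat.lt_or_ge M 9 with h9 | h9
  · interval_cases M
    · show c 2 7 ≤ c 1 4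
      simp [c]
    · show c 2 8 ≤ c 1 5
      simp [c]
  · have l : c 2 M = c 3 M + c 2 (M-2) := c_rec (by omega) (by omega)
    have l2 : c 3 M = c 4 M + c 3 (M-3) := c_rec (by omega) (by omega)
    have t1 : c 4 M ≤ c 3 (M-2) := c_sh (k := 3) (by omega) (by omega)
    have t2 : c 3 (M-2) ≤ c 2 (M-4) := by
      have := c_sh (k := 2) (N := M-2) (by omega) (by omega)
      have e : M - 2 - 2 = M - 4 := by omega
      rwa [e] at this
    have t3 : c 3 (M-3) ≤ c 2 (M-3) := c_anti (by omega)
    have ih : c 2 (M-2) ≤ c 1 (M-5) := by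
      have := c_bnd2 (M := M-2) (by omega)
      have e : M - 2 - 3 = M - 5 := by omega
      rwa [e] at this
    have r1 : c 1 (M-3) = c 2 (M-3) + c 1 (M-4) := by
      have h' := c_rec (k := 1) (n := M-3) (by omega) (by omega)
      have e2 : M-3-1 = M-4 := by omega
      rw [e2] at h'; exact h'
    have r2 : c 1 (M-4) = c 2 (M-4) + c 1 (M-5) := by
      have h' := c_rec (k := 1) (n := M-4) (by omega) (by omega)
      have e2 : M-4-1 = M-5 := by omega
      rw [e2] at h'; exact h'
    omega
termination_by M

lemma c_bnd {k N : ℕ} (hk : 2 ≤ k) (hN : 2*k+3 ≤ N) : c k N ≤ c 1 (N+1-2*k) := by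
  rcases Nat.eq_or_lt_of_le hk with h | h
  · subst h
    have := c_bnd2 (M := N) (by omega)
    have e : N - 3 = N + 1 - 2*2 := by omega
    rwa [e] at this
  · -- 3 ≤ k
    have s : c k N ≤ c (k-1) (N-2) := by
      have := c_sh (k := k-1) (N := N) (by omega) (by omega)
      have e : k - 1 + 1 = k := by omega
      rwa [e] at this
    have ih : c (k-1) (N-2) ≤ c 1 ((N-2)+1-2*(k-1)) := c_bnd (k := k-1) (by omega) (by omega)
    have e : (N-2)+1-2*(k-1) = N+1-2*k := by omega
    rw [e] at ih
    exact le_trans s ih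
termination_by k

lemma c_B {k m x : ℕ} (hk : 2 ≤ k) (h1 : k ≤ m) (h2 : m < 2*k) (hx : 2 ≤ x)
    (hexc : ¬(k = 2 ∧ m = 3 ∧ x = 3)) : c k (m+x) ≤ c 1 x := by
  rcases Nat.lt_or_ge (m+x) (2*k) with hN | hN
  · rw [c_one (by omega) (by omega) (by omega)]
    exact c_pos (by omega) (by omega)
  · rcases Nat.lt_or_ge (m+x) (2*k+2) with hN2 | hN2
    · rw [c_two hk (by omega) (by omega)]
      calc (2:ℕ) = c 1 2 := by simp [c]
      _ ≤ c 1 x := c_mono' (by omega) (by omega) hx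
    · rcases Nat.eq_or_lt_of_le hN2 with hN3 | hN3
      · -- m+x = 2k+2
        rcases Nat.lt_or_ge k 3 with hk3 | hk3
        · -- k = 2, m+x = 6, m ∈ {2,3}
          have hk2 : k = 2 := by omega
          subst hk2
          have : m = 2 ∧ x = 4 := by omega
          obtain ⟨hm, hx4⟩ := this
          subst hm; subst hx4
          show c 2 6 ≤ c 1 4
          simp [c]
        · rw [← hN3, c_three hk3]
          calc (3:ℕ) = c 1 3 := by simp [c]
          _ ≤ c 1 x := c_mono' (by omega) (by omega) (by omega)
      · -- m+x ≥ 2k+3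
        have b := c_bnd (k := k) (N := m+x) hk (by omega)
        refine le_trans b (c_mono' (by omega) (by omega) (by omega))

lemma c_M {k x m : ℕ} (hk : 2 ≤ k) (hx : 2 ≤ x) (hm : k ≤ m)
    (hexc : ¬(k = 2 ∧ x = 3 ∧ (m = 3 ∨ m = 5))) : c k (m+x) ≤ c 1 x * c k m := by
  by_cases h237 : k = 2 ∧ x = 3 ∧ m = 7
  · obtain ⟨e1, e2, e3⟩ := h237; subst e1; subst e2; subst e3
    show c 2 10 ≤ c 1 3 * c 2 7
    simp [c]
  · rcases Nat.lt_or_ge m (2*k) with h2 | h2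
    · rw [c_one (by omega) hm h2, Nat.mul_one]
      exact c_B hk hm h2 hx (by tauto)
    · have l : c k (m+x) = c (k+1) (m+x) + c k ((m-k)+x) := by
        rw [c_rec (by omega) (by omega)]; congr 2; omega
      have r : c k m = c (k+1) m + c k (m-k) := c_rec (by omega) (by omega)
      have t1 : c (k+1) (m+x) ≤ c 1 x * c (k+1) m :=
        c_M (k := k+1) (by omega) hx (by omega) (by omega)
      have t2 : c k ((m-k)+x) ≤ c 1 x * c k (m-k) := by
        refine c_M (k := k) hk hx (by omega) ?_
        rintro ⟨e1, e2, e3⟩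
        rcases e3 with e3 | e3
        · exact hexc ⟨e1, e2, Or.inr (by omega)⟩
        · exact h237 ⟨e1, e2, by omega⟩
      rw [l, r, Nat.mul_add]
      exact Nat.add_le_add t1 t2
termination_by (m, m + 1 - k)
decreasing_by
  · apply Prod.Lex.right; omega
  · apply Prod.Lex.left; omega

lemma c_S {a b : ℕ} (ha : 2 ≤ a) (hab : a ≤ b) (hs : 10 ≤ a + b) :
    c 1 (a+b) < c 1 a * c 1 b := by
  rcases Nat.eq_or_lt_of_le hs with h10 | h10
  · have ha5 : a ≤ 5 := by omega
    have hb : b = 10 - a := by omega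
    subst hb
    interval_cases a <;> simp [c]
  · have hb6 : 6 ≤ b := by omega
    have l : c 1 (a+b) = c 2 (a+b) + c 1 (a+b-1) := by
      rw [c_rec (k := 1) (by omega) (by omega)]
    have hM : c 2 (a+b) ≤ c 1 a * c 2 b := by
      have := c_M (k := 2) (x := a) (m := b) (by omega) ha (by omega)
        (by rintro ⟨_, _, h | h⟩ <;> omega)
      have e : b + a = a + b := by omega
      rwa [e] at this
    have ihs : c 1 (a+b-1) < c 1 a * c 1 (b-1) := by
      rcases Nat.lt_or_ge a b with hlt | hge
      · have := c_S (a := a) (b := b-1) ha (by omega) (by omega)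
        have e : a + (b-1) = a+b-1 := by omega
        rwa [e] at this
      · have := c_S (a := b-1) (b := a) (by omega) (by omega) (by omega)
        have e : b - 1 + a = a+b-1 := by omega
        rw [e] at this
        rw [Nat.mul_comm] at this
        exact this
    have rb : c 1 b = c 2 b + c 1 (b-1) := by rw [c_rec (k := 1) (by omega) (by omega)]
    calc c 1 (a+b) = c 2 (a+b) + c 1 (a+b-1) := l
      _ < c 1 a * c 2 b + c 1 a * c 1 (b-1) := by omega
      _ = c 1 a * c 1 b := by rw [rb, Nat.mul_add]
termination_by a + b



def Q (k n : ℕ) : ℕ :=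
  (Finset.univ.filter (fun P : Nat.Partition n => ∀ i ∈ P.parts, k ≤ i)).card

lemma Q_one (n : ℕ) : partcount n = Q 1 n := by
  unfold partcount Q
  rw [Finset.filter_true_of_mem, Finset.card_univ]
  intro P _ i hi
  exact P.parts_pos hi

lemma Q_zero (k : ℕ) : Q k 0 = 1 := by
  unfold Q
  rw [Finset.filter_true_of_mem, Finset.card_univ, Fintype.card_unique]
  intro P _ i hi
  rw [Nat.Partition.partition_zero_parts] at hi
  simp at hi

lemma Q_of_lt {k n : ℕ} (h1 : 0 < n) (h2 : n < k) : Q k n = 0 := by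
  unfold Q
  rw [Finset.card_eq_zero, Finset.filter_eq_empty_iff]
  intro P _
  intro hall
  have hne : P.parts ≠ 0 := by
    intro h0
    have := P.parts_sum
    rw [h0] at this
    simp at this
    omega
  obtain ⟨i, hi⟩ := Multiset.exists_mem_of_ne_zero hne
  have h3 : i ≤ P.parts.sum := Multiset.single_le_sum (fun x _ => Nat.zero_le x) i hi
  rw [P.parts_sum] at h3
  have := hall i hi
  omega

lemma Q_rec {k n : ℕ} (hk : 0 < k) (hn : k ≤ n) :
    Q k n = Q (k+1) n + Q k (n-k) := by
  classical
  unfold Q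
  rw [← Finset.card_filter_add_card_filter_not
    (s := Finset.univ.filter (fun P : Nat.Partition n => ∀ i ∈ P.parts, k ≤ i))
    (p := fun P => k ∈ P.parts)]
  rw [Nat.add_comm]
  congr 1
  · -- k ∉ parts case = Q (k+1) n
    rw [Finset.filter_filter]
    congr 1
    ext P
    simp only [Finset.mem_filter, Finset.mem_univ, true_and]
    constructor
    · rintro ⟨hall, hnot⟩ i hi
      have := hall i hi
      rcases Nat.eq_or_lt_of_le this with h | h
      · exact absurd (h ▸ hi) hnot
      · omega
    · intro hall
      refine ⟨fun i hi => le_trans (by omega) (hall i hi), fun hk' => ?_⟩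
      have := hall k hk'
      omega
  · -- k ∈ parts case ≃ Q k (n-k)
    rw [Finset.filter_filter]
    refine Finset.card_bij
      (fun P hP => ⟨P.parts.erase k, ?_, ?_⟩) ?_ ?_ ?_
    · intro i hi
      exact P.parts_pos (Multiset.mem_of_mem_erase hi)
    · simp only [Finset.mem_filter, Finset.mem_univ, true_and] at hP
      have hsum : k + (P.parts.erase k).sum = P.parts.sum := by
        rw [← Multiset.sum_cons, Multiset.cons_erase hP.2]
      rw [P.parts_sum] at hsum
      omega
    · intro P hP
      simp only [Finset.mem_filter, Finset.mem_univ, true_and] at hP ⊢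
      intro i hi
      exact hP.1 i (Multiset.mem_of_mem_erase hi)
    · intro P1 h1 P2 h2 heq
      simp only [Finset.mem_filter, Finset.mem_univ, true_and] at h1 h2
      have e : P1.parts.erase k = P2.parts.erase k := congrArg Nat.Partition.parts heq
      apply Nat.Partition.ext
      rw [← Multiset.cons_erase h1.2, ← Multiset.cons_erase h2.2, e]
    · intro R hR
      simp only [Finset.mem_filter, Finset.mem_univ, true_and] at hR
      refine ⟨⟨k ::ₘ R.parts, ?_, ?_⟩, ?_, ?_⟩
      · intro i hi
        rcases Multiset.mem_cons.mp hi with h | h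
        · omega
        · exact R.parts_pos h
      · rw [Multiset.sum_cons, R.parts_sum]
        omega
      · simp only [Finset.mem_filter, Finset.mem_univ, true_and]
        constructor
        · intro i hi
          rcases Multiset.mem_cons.mp hi with h | h
          · omega
          · exact hR i h
        · exact Multiset.mem_cons_self k R.parts
      · apply Nat.Partition.ext
        simp [Multiset.erase_cons_head]


lemma Q_eq_c {k n : ℕ} (hk : 0 < k) : Q k n = c k n := by
  rcases Nat.eq_zero_or_pos n with h | h
  · subst h; rw [Q_zero, c_zero]
  · rcases Nat.lt_or_ge n k with h2 | h2
    · rw [Q_of_lt h h2, c_of_lt h h2]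
    · rw [Q_rec hk h2, c_rec hk h2,
        Q_eq_c (k := k+1) (n := n) (by omega), Q_eq_c (k := k) (n := n-k) hk]
termination_by (n, n + 1 - k)
decreasing_by
  · apply Prod.Lex.right; omega
  · apply Prod.Lex.left; omega

lemma partcount_eq_c (n : ℕ) : partcount n = c 1 n := by
  rw [Q_one, Q_eq_c (by omega)]

/-- Bessenrodt–Ono inequality. -/
theorem bessenrodt_ono (a b : ℕ) (ha : 2 ≤ a) (hb : 2 ≤ b) (hab : 10 ≤ a + b) :
    partcount a * partcount b > partcount (a + b) := by
  rw [partcount_eq_c, partcount_eq_c, partcount_eq_c]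
  rcases Nat.le_total a b with h | h
  · exact c_S ha h hab
  · have := c_S hb h (by omega)
    rw [Nat.add_comm b a] at this
    rw [Nat.mul_comm]
    exact this
end

section
/- For all real a ≥ 1093, one has 48 a² (1 + ln(2a)) < Σ_{ℓ=1}^{5} (1/ℓ!) · C(a-2, ℓ-1), where C(a-2, ℓ-1) denotes the polynomial binomial coefficient (a-2)(a-3)...(a-ℓ)/(ℓ-1)!. -/
lemma log_1093_div_1024_le :
    Real.log (1093 / 1024) ≤ 69/1024 - (69/1024)^2/2 + (69/1024)^3/3 - (69/1024)^4/4
      + (69/1024)^5 / (1 - 69/1024) := by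
  have h : |(-(69/1024) : ℝ)| < 1 := by rw [abs_neg, abs_of_pos] <;> norm_num
  have key := Real.abs_log_sub_add_sum_range_le h 4
  have hs : (∑ i ∈ Finset.range 4, (-(69/1024):ℝ) ^ (i + 1) / (i + 1))
      = -(69/1024) + (69/1024)^2/2 - (69/1024)^3/3 + (69/1024)^4/4 := by
    simp [Finset.sum_range_succ]
    norm_num
  rw [hs] at key
  have h1 : (1 : ℝ) - -(69/1024) = 1093/1024 := by norm_num
  rw [h1] at key
  have habs : |(-(69/1024) : ℝ)| = 69/1024 := by rw [abs_neg, abs_of_pos] <;> norm_num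
  rw [habs] at key
  have := abs_le.mp key
  linarith [this.2]

lemma log_2186_lt : Real.log 2186 < 7.68985 := by
  have h2 : Real.log 2 < 0.6931471808 := Real.log_two_lt_d9
  have heq : Real.log 2186 = 11 * Real.log 2 + Real.log (1093/1024) := by
    have : (2186 : ℝ) = 2 ^ 11 * (1093 / 1024) := by norm_num
    rw [this, Real.log_mul (by positivity) (by norm_num), Real.log_pow]
    push_cast
    ring
  have h3 := log_1093_div_1024_le
  rw [heq]
  norm_num at h2 h3 ⊢
  linarith

theorem final_inequality (a : ℝ) (ha : 1093 ≤ a) :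
    48 * a ^ 2 * (1 + Real.log (2 * a)) <
      ∑ l ∈ Finset.Icc 1 5, (1 / (Nat.factorial l : ℝ)) *
        ((∏ j ∈ Finset.Icc 2 l, (a - (j : ℝ))) / (Nat.factorial (l - 1) : ℝ)) := by
  have ha0 : (0:ℝ) < a := by linarith
  have hlog1 : Real.log (2 * a) = Real.log 2186 + Real.log (a / 1093) := by
    rw [Real.log_mul (by norm_num) ha0.ne', Real.log_div ha0.ne' (by norm_num),
      show (2186:ℝ) = 2 * 1093 by norm_num, Real.log_mul (by norm_num) (by norm_num)]
    ring
  have hlog2 : Real.log (a / 1093) ≤ a / 1093 - 1 :=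
    Real.log_le_sub_one_of_pos (by positivity)
  have hlog : Real.log (2 * a) < 7.68985 + (a / 1093 - 1) := by
    have := log_2186_lt
    linarith
  have hL : 48 * a ^ 2 * (1 + Real.log (2 * a)) < 48 * a ^ 2 * (7.68985 + a / 1093) := by
    apply mul_lt_mul_of_pos_left _ (by positivity)
    linarith
  have hsum : ∑ l ∈ Finset.Icc 1 5, (1 / (Nat.factorial l : ℝ)) *
        ((∏ j ∈ Finset.Icc 2 l, (a - (j : ℝ))) / (Nat.factorial (l - 1) : ℝ))
      = 1 + (a - 2) / 2 + (a - 2) * (a - 3) / 12 + (a - 2) * (a - 3) * (a - 4) / 144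
        + (a - 2) * (a - 3) * (a - 4) * (a - 5) / 2880 := by
    rw [show Finset.Icc 1 5 = {1, 2, 3, 4, 5} by rfl]
    simp [Finset.sum_insert, Finset.prod_insert, Nat.factorial]
    norm_num [show Finset.Icc 2 2 = {2} by rfl, show Finset.Icc 2 3 = {2, 3} by rfl,
      show Finset.Icc 2 4 = {2, 3, 4} by rfl, show Finset.Icc 2 5 = {2, 3, 4, 5} by rfl]
    ring
  rw [hsum]
  have ht : 0 ≤ a - 1093 := by linarith
  nlinarith [hL, mul_nonneg ht ht, mul_nonneg (mul_nonneg ht ht) ht,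
    mul_nonneg (mul_nonneg (mul_nonneg ht ht) ht) ht]
end

section
/- Define polynomials P_0(x) = 1 and P_n(x) = (x/n) Σ_{k=1}^{n} σ(k) P_{n-k}(x) for n ≥ 1. Then for every positive integer n, P_n(1) = p(n), the number of partitions of n. -/
/-- Sum of divisors function. -/
def mysigma (n : ℕ) : ℕ := ∑ d ∈ n.divisors, d

/-- D'Arcais polynomials as real functions. -/
noncomputable def P : ℕ → ℝ → ℝ
  | 0 => fun _ => 1
  | n + 1 => fun x => x / (n + 1) * ∑ k ∈ Finset.range (n + 1), (mysigma (k + 1) : ℝ) * P (n - k) x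

/-- Number of k-colored partitions of n (each part in one of k colors),
counted via splitting into one ordinary partition per color. -/
def pcolored : ℕ → ℕ → ℕ
  | 0, n => if n = 0 then 1 else 0
  | k + 1, n => ∑ j ∈ Finset.range (n + 1), pcolored k j * partcount (n - j)


def countEquiv (N d m : ℕ) (hd : 0 < d) (h : d * m ≤ N) :
    {l : N.Partition // m ≤ l.parts.count d} ≃ (N - d * m).Partition where
  toFun l := ⟨l.1.parts - Multiset.replicate m d,
    fun {i} hi => l.1.parts_pos (Multiset.mem_of_le tsub_le_self hi),
    by
      have hle : Multiset.replicate m d ≤ l.1.parts :=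
        Multiset.le_count_iff_replicate_le.mp l.2
      have h2 : (l.1.parts - Multiset.replicate m d) + Multiset.replicate m d = l.1.parts :=
        tsub_add_cancel_of_le hle
      have := congrArg Multiset.sum h2
      rw [Multiset.sum_add, Multiset.sum_replicate, smul_eq_mul, mul_comm m d, l.1.parts_sum] at this
      omega⟩
  invFun p := ⟨⟨p.parts + Multiset.replicate m d,
    fun {i} hi => by
      rcases Multiset.mem_add.mp hi with h1 | h1
      · exact p.parts_pos h1
      · rw [Multiset.eq_of_mem_replicate h1]; exact hd,
    by rw [Multiset.sum_add, p.parts_sum, Multiset.sum_replicate, smul_eq_mul,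
        mul_comm m d, Nat.sub_add_cancel h]⟩,
    by simp⟩
  left_inv l := by
    ext1; ext1
    exact tsub_add_cancel_of_le (Multiset.le_count_iff_replicate_le.mp l.2)
  right_inv p := by
    ext1
    exact add_tsub_cancel_right _ _

lemma card_ge (N d m : ℕ) (hd : 0 < d) (h : d * m ≤ N) :
    ({l : N.Partition | m ≤ l.parts.count d} : Finset _).card = partcount (N - d * m) := by
  classical
  rw [partcount, ← Fintype.card_congr (countEquiv N d m hd h), Fintype.card_subtype]

lemma parts_sum_eq (N : ℕ) (l : N.Partition) :
    l.parts.sum = ∑ d ∈ Finset.Icc 1 N, l.parts.count d * d := by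
  classical
  have h1 : l.parts.sum = ∑ a ∈ l.parts.toFinset, l.parts.count a • a := by
    conv_lhs => rw [← Multiset.map_id l.parts]
    exact Finset.sum_multiset_map_count _ _
  rw [h1]
  apply Finset.sum_subset
  · intro a ha
    rw [Multiset.mem_toFinset] at ha
    have h2 : 0 < a := l.parts_pos ha
    have h3 : a ≤ l.parts.sum := Multiset.single_le_sum (fun x _ => Nat.zero_le x) a ha
    rw [l.parts_sum] at h3
    exact Finset.mem_Icc.mpr ⟨h2, h3⟩
  · intro a _ ha
    rw [Multiset.mem_toFinset] at ha
    simp [Multiset.count_eq_zero_of_notMem ha]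

lemma count_mul_le (N d : ℕ) (l : N.Partition) : l.parts.count d * d ≤ N := by
  have : Multiset.replicate (l.parts.count d) d ≤ l.parts :=
    Multiset.le_count_iff_replicate_le.mp le_rfl
  obtain ⟨u, hu⟩ := Multiset.le_iff_exists_add.mp this
  have h2 := congrArg Multiset.sum hu
  rw [Multiset.sum_add, Multiset.sum_replicate, smul_eq_mul, l.parts_sum] at h2
  omega

lemma ite_sum_helper (c N : ℕ) (h : c ≤ N) :
    ∑ m ∈ Finset.Icc 1 N, (if m ≤ c then 1 else 0) = c := by
  classical
  rw [← Finset.card_filter]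
  have : (Finset.Icc 1 N).filter (fun m => m ≤ c) = Finset.Icc 1 c := by
    ext x; simp only [Finset.mem_filter, Finset.mem_Icc]; omega
  rw [this, Nat.card_Icc]; omega

lemma sum_count_eq (N d : ℕ) (hd : 0 < d) :
    ∑ l : N.Partition, l.parts.count d
      = ∑ m ∈ Finset.Icc 1 N, ({l : N.Partition | m ≤ l.parts.count d} : Finset _).card := by
  classical
  have hcount : ∀ l : N.Partition, l.parts.count d ≤ N := fun l => by
    have h1 := count_mul_le N d l
    have h2 : l.parts.count d ≤ l.parts.count d * d := Nat.le_mul_of_pos_right _ hd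
    omega
  calc ∑ l : N.Partition, l.parts.count d
      = ∑ l : N.Partition, ∑ m ∈ Finset.Icc 1 N, (if m ≤ l.parts.count d then 1 else 0) := by
        exact Finset.sum_congr rfl fun l _ => (ite_sum_helper _ _ (hcount l)).symm
    _ = ∑ m ∈ Finset.Icc 1 N, ∑ l : N.Partition, (if m ≤ l.parts.count d then 1 else 0) :=
        Finset.sum_comm
    _ = _ := Finset.sum_congr rfl fun m _ => (Finset.card_filter _ _).symm

lemma lemA (N : ℕ) :
    N * partcount N
      = ∑ p ∈ (Finset.Icc 1 N ×ˢ Finset.Icc 1 N).filter (fun p => p.1 * p.2 ≤ N),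
          p.1 * partcount (N - p.1 * p.2) := by
  classical
  have step1 : N * partcount N = ∑ _l : N.Partition, N := by
    rw [Finset.sum_const, Finset.card_univ, smul_eq_mul, mul_comm, partcount]
  have step2 : ∑ _l : N.Partition, N = ∑ l : N.Partition, l.parts.sum :=
    Finset.sum_congr rfl fun l _ => l.parts_sum.symm
  rw [step1, step2]
  have step3 : ∑ l : N.Partition, l.parts.sum
      = ∑ d ∈ Finset.Icc 1 N, ∑ l : N.Partition, l.parts.count d * d := by
    rw [← Finset.sum_comm]
    exact Finset.sum_congr rfl fun l _ => parts_sum_eq N l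
  rw [step3]
  have step4 : ∀ d ∈ Finset.Icc 1 N,
      ∑ l : N.Partition, l.parts.count d * d
        = ∑ m ∈ Finset.Icc 1 N, (if d * m ≤ N then d * partcount (N - d * m) else 0) := by
    intro d hd
    rw [Finset.mem_Icc] at hd
    have hd0 : 0 < d := hd.1
    rw [← Finset.sum_mul, sum_count_eq N d hd0, Finset.sum_mul]
    refine Finset.sum_congr rfl fun m _ => ?_
    by_cases hdm : d * m ≤ N
    · rw [if_pos hdm, card_ge N d m hd0 hdm, mul_comm]
    · rw [if_neg hdm]
      have : ({l : N.Partition | m ≤ l.parts.count d} : Finset _) = ∅ := by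
        apply Finset.filter_eq_empty_iff.mpr
        intro l _ hml
        have h1 := count_mul_le N d l
        have h2 : m * d ≤ l.parts.count d * d := Nat.mul_le_mul_right d hml
        rw [mul_comm] at hdm
        omega
      rw [this, Finset.card_empty, zero_mul]
  rw [Finset.sum_congr rfl step4, ← Finset.sum_product', Finset.sum_filter]

lemma lemB (N : ℕ) :
    ∑ k ∈ Finset.Icc 1 N, mysigma k * partcount (N - k)
      = ∑ p ∈ (Finset.Icc 1 N ×ˢ Finset.Icc 1 N).filter (fun p => p.1 * p.2 ≤ N),
          p.1 * partcount (N - p.1 * p.2) := by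
  classical
  have expand : ∀ k ∈ Finset.Icc 1 N, mysigma k * partcount (N - k)
      = ∑ d ∈ k.divisors, d * partcount (N - k) := by
    intro k _; rw [mysigma, Finset.sum_mul]
  rw [Finset.sum_congr rfl expand, Finset.sum_sigma']
  refine Finset.sum_nbij' (fun x => (x.2, x.1 / x.2)) (fun p => ⟨p.1 * p.2, p.1⟩)
    ?_ ?_ ?_ ?_ ?_
  · rintro ⟨k, d⟩ hx
    dsimp only
    simp only [Finset.mem_sigma, Finset.mem_Icc, Nat.mem_divisors] at hx
    obtain ⟨⟨hk1, hkN⟩, hdvd, hk0⟩ := hx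
    have hd0 : 0 < d := Nat.pos_of_dvd_of_pos hdvd (by omega)
    have hdk : d ≤ k := Nat.le_of_dvd (by omega) hdvd
    have hmul : d * (k / d) = k := Nat.mul_div_cancel' hdvd
    simp only [Finset.mem_filter, Finset.mem_product, Finset.mem_Icc]
    refine ⟨⟨⟨hd0, le_trans hdk hkN⟩, ?_, le_trans (Nat.div_le_self k d) hkN⟩, ?_⟩
    · exact Nat.div_pos hdk hd0
    · omega
  · rintro ⟨d, m⟩ hp
    dsimp only
    simp only [Finset.mem_filter, Finset.mem_product, Finset.mem_Icc] at hp
    obtain ⟨⟨⟨hd1, _⟩, hm1, _⟩, hdm⟩ := hp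
    simp only [Finset.mem_sigma, Finset.mem_Icc, Nat.mem_divisors]
    have h0 : 0 < d * m := Nat.mul_pos hd1 hm1
    exact ⟨⟨h0, hdm⟩, dvd_mul_right d m, h0.ne'⟩
  · rintro ⟨k, d⟩ hx
    dsimp only
    simp only [Finset.mem_sigma, Finset.mem_Icc, Nat.mem_divisors] at hx
    have hmul : d * (k / d) = k := Nat.mul_div_cancel' hx.2.1
    simp only [hmul]
  · rintro ⟨d, m⟩ hp
    dsimp only
    simp only [Finset.mem_filter, Finset.mem_product, Finset.mem_Icc] at hp
    have : d * m / d = m := Nat.mul_div_cancel_left m (by omega)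
    simp only [this]
  · rintro ⟨k, d⟩ hx
    dsimp only
    simp only [Finset.mem_sigma, Finset.mem_Icc, Nat.mem_divisors] at hx
    have hmul : d * (k / d) = k := Nat.mul_div_cancel' hx.2.1
    simp only [hmul]

lemma key (N : ℕ) : N * partcount N = ∑ k ∈ Finset.Icc 1 N, mysigma k * partcount (N - k) :=
  (lemA N).trans (lemB N).symm

lemma key' (m : ℕ) :
    (m + 1) * partcount (m + 1)
      = ∑ k ∈ Finset.range (m + 1), mysigma (k + 1) * partcount (m - k) := by
  rw [key (m + 1), ← Finset.Ico_add_one_right_eq_Icc, Finset.sum_Ico_eq_sum_range]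
  refine Finset.sum_congr rfl fun k _ => ?_
  have h : m + 1 - (1 + k) = m - k := by omega
  rw [h, add_comm 1 k]


lemma Pone (n : ℕ) : P n 1 = (partcount n : ℝ) := by
  induction n using Nat.strong_induction_on with
  | _ n ih =>
    match n with
    | 0 =>
      have : partcount 0 = 1 := Fintype.card_unique
      simp [P, this]
    | m + 1 =>
      rw [P]
      dsimp only
      have hsum : ∑ k ∈ Finset.range (m + 1), (mysigma (k + 1) : ℝ) * P (m - k) 1
          = ((∑ k ∈ Finset.range (m + 1), mysigma (k + 1) * partcount (m - k) : ℕ) : ℝ) := by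
        push_cast
        exact Finset.sum_congr rfl fun k _ => by rw [ih (m - k) (by omega)]
      rw [hsum, ← key' m]
      push_cast
      have hm : ((m : ℝ) + 1) ≠ 0 := by positivity
      field_simp

theorem darcais_at_one (n : ℕ) (hn : 0 < n) : P n 1 = (partcount n : ℝ) := Pone n
end

section
/- Define polynomials P_0(x) = 1 and P_n(x) = (x/n) Σ_{k=1}^{n} σ(k) P_{n-k}(x) for n ≥ 1. Then for every positive integer k and every n ≥ 0, P_n(k) equals the number of k-colored partitions of n. -/
/-!
Over all partitions of `N`, the part `d` occurs `∑_{e ≥ 1} p(N - d e)` times in total (removing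
`e` copies of `d` matches partitions with at least `e` of them to partitions of `N - d e`).
Weighting by `d` and summing over `d` yields Euler's identity `N p(N) = ∑_{m ≤ N} σ(m) p(N - m)`,
i.e. `F' = S F` for `F = ∑ p(n) Xⁿ` and `S = ∑ σ(n + 1) Xⁿ`. The `k`-colored partition numbers
are the coefficients of `F ^ k`, so `(F ^ k)' = k S F ^ k`; on coefficients this is the recurrence
defining `P_n(k)`.
-/

open Finset PowerSeries

namespace Nat.Partition

variable {N : ℕ}

theorem sum_count_mul_eq (l : N.Partition) : ∑ d ∈ Icc 1 N, l.parts.count d * d = N :=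
  (mem_finsuppAntidiag.mp l.toFinsuppAntidiag_mem_finsuppAntidiag).1

theorem count_mul_le (l : N.Partition) (d : ℕ) : l.parts.count d * d ≤ N := by
  by_cases hd : d ∈ Icc 1 N
  · calc l.parts.count d * d ≤ ∑ d ∈ Icc 1 N, l.parts.count d * d :=
          single_le_sum (f := fun d => l.parts.count d * d) (fun _ _ => zero_le _) hd
      _ = N := l.sum_count_mul_eq
  · rw [Multiset.count_eq_zero.mpr fun h => hd (mem_Icc.mpr ⟨l.parts_pos h, le_of_mem_parts h⟩)]
    exact (zero_mul d).trans_le (zero_le N)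

def partitionWithReplicateEquiv {d e : ℕ} (hd : 0 < d) (h : d * e ≤ N) :
    {l : N.Partition // e ≤ l.parts.count d} ≃ (N - d * e).Partition where
  toFun l := ⟨l.1.parts - Multiset.replicate e d,
    fun hi => l.1.parts_pos (Multiset.mem_of_le tsub_le_self hi), by
      have := congrArg Multiset.sum
        (tsub_add_cancel_of_le (Multiset.le_count_iff_replicate_le.mp l.2))
      simp only [Multiset.sum_add, Multiset.sum_replicate, smul_eq_mul, l.1.parts_sum] at this
      lia⟩
  invFun m := ⟨⟨m.parts + Multiset.replicate e d, by
      intro i hi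
      rcases Multiset.mem_add.mp hi with hi | hi
      · exact m.parts_pos hi
      · rwa [Multiset.eq_of_mem_replicate hi], by
      simp only [Multiset.sum_add, Multiset.sum_replicate, smul_eq_mul, m.parts_sum]; lia⟩, by
    simp⟩
  left_inv l := Subtype.ext <| Nat.Partition.ext <|
    tsub_add_cancel_of_le (Multiset.le_count_iff_replicate_le.mp l.2)
  right_inv m := Nat.Partition.ext <| by simp

theorem card_filter_le_count_parts {d e : ℕ} (hd : 0 < d) (h : d * e ≤ N) :
    #{l : N.Partition | e ≤ l.parts.count d} = partcount (N - d * e) := by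
  rw [← Fintype.card_subtype]
  exact Fintype.card_congr (partitionWithReplicateEquiv hd h)

theorem sum_count_parts_eq {d : ℕ} (hd : 0 < d) :
    ∑ l : N.Partition, l.parts.count d = ∑ e ∈ Icc 1 (N / d), partcount (N - d * e) := by
  have hcount (l : N.Partition) :
      l.parts.count d = #{e ∈ Icc 1 (N / d) | e ≤ l.parts.count d} := by
    have hle := (Nat.le_div_iff_mul_le hd).mpr (l.count_mul_le d)
    rw [show {e ∈ Icc 1 (N / d) | e ≤ l.parts.count d} = Icc 1 (l.parts.count d) by
      ext; simp only [mem_filter, mem_Icc]; omega, Nat.card_Icc, Nat.add_sub_cancel]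
  simp only [sum_congr rfl fun l _ => hcount l, card_filter]
  rw [sum_comm]
  refine sum_congr rfl fun e he => ?_
  rw [← card_filter]
  exact card_filter_le_count_parts hd <| (mul_comm d e).trans_le <|
    (Nat.le_div_iff_mul_le hd).mp (mem_Icc.mp he).2

end Nat.Partition

theorem sum_filter_dvd_eq {M : Type*} [AddCommMonoid M] {N d : ℕ} (hd : 0 < d) (f : ℕ → M) :
    ∑ m ∈ Icc 1 N with d ∣ m, f m = ∑ e ∈ Icc 1 (N / d), f (d * e) := by
  have hle {e : ℕ} : e ≤ N / d ↔ d * e ≤ N := by rw [Nat.le_div_iff_mul_le hd, mul_comm]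
  refine sum_nbij' (· / d) (d * ·) ?_ ?_ ?_ ?_ ?_
  · intro m hm
    rw [mem_filter, mem_Icc] at hm
    obtain ⟨⟨hm1, hmN⟩, c, rfl⟩ := hm
    rw [mem_Icc, Nat.mul_div_cancel_left c hd, hle]
    exact ⟨Nat.pos_of_mul_pos_left hm1, hmN⟩
  · intro e he
    rw [mem_Icc, hle] at he
    exact mem_filter.mpr ⟨mem_Icc.mpr ⟨Nat.mul_pos hd he.1, he.2⟩, dvd_mul_right d e⟩
  · intro m hm
    exact Nat.mul_div_cancel' (mem_filter.mp hm).2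
  · intro e _
    exact Nat.mul_div_cancel_left e hd
  · intro m hm
    rw [Nat.mul_div_cancel' (mem_filter.mp hm).2]

theorem sum_mysigma_smul_eq {M : Type*} [AddCommMonoid M] (N : ℕ) (g : ℕ → M) :
    ∑ m ∈ Icc 1 N, mysigma m • g m = ∑ d ∈ Icc 1 N, ∑ e ∈ Icc 1 (N / d), d • g (d * e) := by
  simp only [mysigma, sum_smul]
  rw [sum_comm' (t' := Icc 1 N) (s' := fun d => {m ∈ Icc 1 N | d ∣ m})]
  · exact sum_congr rfl fun d hd => sum_filter_dvd_eq (mem_Icc.mp hd).1 _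
  · intro m d
    simp only [mem_Icc, Nat.mem_divisors, mem_filter]
    constructor
    · rintro ⟨⟨hm1, hmN⟩, hdm, -⟩
      have := Nat.le_of_dvd hm1 hdm
      exact ⟨⟨⟨hm1, hmN⟩, hdm⟩, Nat.pos_of_dvd_of_pos hdm hm1, by omega⟩
    · rintro ⟨⟨⟨hm1, hmN⟩, hdm⟩, -⟩
      exact ⟨⟨hm1, hmN⟩, hdm, by omega⟩

theorem mul_partcount_eq_sum_mysigma (N : ℕ) :
    N * partcount N = ∑ m ∈ Icc 1 N, mysigma m * partcount (N - m) := by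
  calc N * partcount N = ∑ l : N.Partition, ∑ d ∈ Icc 1 N, l.parts.count d * d := by
        rw [sum_congr rfl fun l _ => l.sum_count_mul_eq, sum_const, card_univ, smul_eq_mul,
          partcount, mul_comm]
    _ = ∑ d ∈ Icc 1 N, ∑ e ∈ Icc 1 (N / d), d • partcount (N - d * e) := by
        rw [sum_comm]
        refine sum_congr rfl fun d hd => ?_
        rw [← sum_mul, Nat.Partition.sum_count_parts_eq (mem_Icc.mp hd).1, sum_mul]
        simp only [smul_eq_mul, mul_comm]
    _ = _ := (sum_mysigma_smul_eq N fun m => partcount (N - m)).symm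

noncomputable def partitionSeries : ℕ⟦X⟧ := PowerSeries.mk partcount

noncomputable def sigmaSeries : ℕ⟦X⟧ := PowerSeries.mk fun n => mysigma (n + 1)

theorem derivative_partitionSeries :
    d⁄dX ℕ partitionSeries = sigmaSeries * partitionSeries := by
  ext n
  rw [coeff_derivative, coeff_mul, Nat.sum_antidiagonal_eq_sum_range_succ_mk]
  simp only [partitionSeries, sigmaSeries, coeff_mk, Nat.cast_id, Nat.succ_eq_add_one,
    ← Nat.add_sub_add_right n 1]
  rw [mul_comm, mul_partcount_eq_sum_mysigma, range_eq_Ico,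
    sum_Ico_add' (fun m => mysigma m * partcount (n + 1 - m)), zero_add,
    Ico_add_one_right_eq_Icc]

theorem derivative_partitionSeries_pow (k : ℕ) :
    d⁄dX ℕ (partitionSeries ^ k) = k • (sigmaSeries * partitionSeries ^ k) := by
  rw [derivative_pow, derivative_partitionSeries, nsmul_eq_mul]
  rcases k with _ | k
  · simp
  · rw [Nat.add_sub_cancel, pow_succ]
    ring

theorem coeff_partitionSeries_pow (k n : ℕ) : coeff n (partitionSeries ^ k) = pcolored k n := by
  induction k generalizing n with
  | zero => simp [pcolored, coeff_one]
  | succ k ih =>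
    rw [pow_succ, coeff_mul, Nat.sum_antidiagonal_eq_sum_range_succ_mk, pcolored]
    simp only [ih]
    simp only [partitionSeries, coeff_mk]

theorem pcolored_zero (k : ℕ) : pcolored k 0 = 1 := by
  rw [← coeff_partitionSeries_pow, coeff_zero_eq_constantCoeff_apply, map_pow]
  simp [partitionSeries, partcount]

theorem succ_mul_pcolored_succ (k n : ℕ) :
    (n + 1) * pcolored k (n + 1)
      = k * ∑ j ∈ range (n + 1), mysigma (j + 1) * pcolored k (n - j) := by
  have hcoeff := congrArg (coeff n) (derivative_partitionSeries_pow k)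
  rw [coeff_derivative, map_nsmul, coeff_mul, Nat.sum_antidiagonal_eq_sum_range_succ_mk] at hcoeff
  simpa only [coeff_partitionSeries_pow, sigmaSeries, coeff_mk, smul_eq_mul, Nat.cast_id,
    Nat.succ_eq_add_one, mul_comm] using hcoeff

theorem darcais_at_nat_general (k : ℕ) (n : ℕ) :
    P n (k : ℝ) = (pcolored k n : ℝ) := by
  induction n using Nat.strong_induction_on with
  | _ n ih =>
    cases n with
    | zero => simp [P, pcolored_zero]
    | succ n =>
      have hrec : ((n : ℝ) + 1) * pcolored k (n + 1)
          = k * ∑ j ∈ range (n + 1), (mysigma (j + 1) : ℝ) * pcolored k (n - j) := by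
        exact_mod_cast succ_mul_pcolored_succ k n
      rw [P]
      dsimp only
      rw [sum_congr rfl fun j _ => by rw [ih (n - j) (Nat.sub_lt_succ n j)], div_mul_eq_mul_div,
        ← hrec]
      field_simp

theorem darcais_at_nat (k : ℕ) (hk : 0 < k) (n : ℕ) :
    P n (k : ℝ) = (pcolored k n : ℝ) :=
  darcais_at_nat_general k n
end

section
/- Let P_n(x) be the D'Arcais polynomials defined by P_0(x)=1 and P_n(x) = (x/n) Σ_{k=1}^{n} σ(k) P_{n-k}(x). For all real x ≥ 0 and n ≥ 1, P_n(x) ≥ (x/n) · L_{n-1}^{(1)}(−x), where L_{n}^{(α)} is the associated Laguerre polynomial. -/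
/-- Generalized (associated) Laguerre polynomial with nonnegative integer parameter α. -/
noncomputable def laguerre (α : ℕ) (n : ℕ) (x : ℝ) : ℝ :=
  ∑ k ∈ Finset.range (n + 1), (-1) ^ k * (Nat.choose (n + α) (n - k) : ℝ) * x ^ k / (Nat.factorial k : ℝ)

/-!
Both sides satisfy a recurrence `u n = (x / n) * ∑_{k=1}^{n} a k * u (n - k)` with `u 0 = 1`:
the D'Arcais polynomials with weights `a k = σ k`, and `(x / n) L_{n-1}^{(1)}(-x)`, the coefficient
of `t ^ n` in `exp (x * t / (1 - t)) = exp (x * ∑_{k ≥ 1} t ^ k)`, with weights `a k = k`.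
Since `σ k ≥ k ≥ 0` and `x ≥ 0`, strong induction on `n` compares the two sequences.
-/

open Finset
open scoped Nat

lemma le_mysigma (k : ℕ) : k ≤ mysigma k := by
  rcases k.eq_zero_or_pos with rfl | hk
  · exact le_rfl
  · exact single_le_sum (f := id) (fun d _ => d.zero_le) (Nat.mem_divisors_self k hk.ne')

namespace Nat

lemma sum_range_choose_sub (N m : ℕ) :
    ∑ j ∈ range (N + 1), (N - j).choose m = (N + 1).choose (m + 1) := by
  induction N with
  | zero => cases m <;> simp [choose_eq_zero_of_lt]
  | succ N ih =>
    rw [sum_range_succ', Nat.sub_zero, choose_succ_succ' (N + 1)]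
    simp only [Nat.add_sub_add_right]
    rw [ih, add_comm]

lemma sum_range_succ_mul_choose_sub (N m : ℕ) :
    ∑ k ∈ range (N + 1), (k + 1) * (N - k).choose m = (N + 2).choose (m + 2) := by
  induction N with
  | zero => cases m <;> simp [choose_eq_zero_of_lt]
  | succ N ih =>
    have split : ∀ k, (k + 1 + 1) * (N - k).choose m
        = (k + 1) * (N - k).choose m + (N - k).choose m := fun k => by ring
    rw [sum_range_succ']
    simp only [Nat.add_sub_add_right, Nat.sub_zero, split, sum_add_distrib, ih,
      sum_range_choose_sub]
    rw [choose_succ_succ' (N + 2) (m + 1), choose_succ_succ' (N + 1) m]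
    ring

end Nat

def DArcaisRecurrence (a : ℕ → ℝ) (x : ℝ) (u : ℕ → ℝ) : Prop :=
  ∀ n : ℕ, u (n + 1) = x / (n + 1) * ∑ k ∈ range (n + 1), a (k + 1) * u (n - k)

section Comparison

variable {a b u v : ℕ → ℝ} {x : ℝ}

lemma DArcaisRecurrence.nonneg (hu : DArcaisRecurrence a x u) (hx : 0 ≤ x) (ha : ∀ k, 0 ≤ a k)
    (hu0 : 0 ≤ u 0) (n : ℕ) : 0 ≤ u n := by
  induction n using Nat.strong_induction_on with
  | _ n ih =>
    rcases n with _ | n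
    · exact hu0
    · rw [hu n]
      exact mul_nonneg (by positivity)
        (sum_nonneg fun k _ => mul_nonneg (ha _) (ih _ (by omega)))

lemma DArcaisRecurrence.le (hu : DArcaisRecurrence a x u) (hv : DArcaisRecurrence b x v)
    (hx : 0 ≤ x) (ha : ∀ k, 0 ≤ a k) (hab : ∀ k, a k ≤ b k) (hu0 : 0 ≤ u 0) (huv0 : u 0 ≤ v 0)
    (n : ℕ) : u n ≤ v n := by
  induction n using Nat.strong_induction_on with
  | _ n ih =>
    rcases n with _ | n
    · exact huv0
    · rw [hu n, hv n]
      refine mul_le_mul_of_nonneg_left (sum_le_sum fun k hk => ?_) (by positivity)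
      exact mul_le_mul (hab _) (ih _ (by simp at hk; omega)) (hu.nonneg hx ha hu0 _)
        ((ha _).trans (hab _))

end Comparison

lemma darcaisRecurrence_P (x : ℝ) :
    DArcaisRecurrence (fun k => mysigma k) x (fun n => P n x) := fun n => by
  simp only [P]

/-- The coefficient of `t ^ n` in `exp (x * t / (1 - t)) = exp (x * ∑_{k ≥ 1} t ^ k)`. -/
noncomputable def expGeomCoeff (x : ℝ) : ℕ → ℝ
  | 0 => 1
  | n + 1 => ∑ m ∈ range (n + 1), (n.choose m : ℝ) * (x ^ (m + 1) / (m + 1)!)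

lemma expGeomCoeff_succ_eq_sum_range {x : ℝ} {n N : ℕ} (hn : n < N) :
    expGeomCoeff x (n + 1) = ∑ m ∈ range N, (n.choose m : ℝ) * (x ^ (m + 1) / (m + 1)!) := by
  refine sum_subset (range_subset_range.2 hn) fun m _ hm => ?_
  rw [Nat.choose_eq_zero_of_lt (by simpa using hm)]
  simp

lemma pow_succ_div_factorial_mul (x : ℝ) (m : ℕ) :
    x ^ (m + 1) / (m + 1)! * (m + 1) = x * (x ^ m / m !) := by
  rw [Nat.factorial_succ]
  push_cast
  field_simp
  ring

lemma sum_range_succ_mul_expGeomCoeff (x : ℝ) (N : ℕ) :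
    ∑ k ∈ range (N + 1), ((k + 1 : ℕ) : ℝ) * expGeomCoeff x (N + 1 - k)
      = ∑ m ∈ range (N + 1), ((N + 2).choose (m + 2) : ℝ) * (x ^ (m + 1) / (m + 1)!) := by
  have expand : ∀ k ∈ range (N + 1), ((k + 1 : ℕ) : ℝ) * expGeomCoeff x (N + 1 - k)
      = ∑ m ∈ range (N + 1), ((k + 1) * (N - k).choose m : ℕ) * (x ^ (m + 1) / (m + 1)!) := by
    intro k hk
    rw [mem_range] at hk
    rw [show N + 1 - k = N - k + 1 by omega,
      expGeomCoeff_succ_eq_sum_range (by omega : N - k < N + 1), mul_sum]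
    refine sum_congr rfl fun m _ => ?_
    push_cast
    ring
  rw [sum_congr rfl expand, sum_comm]
  simp only [← sum_mul, ← Nat.cast_sum, Nat.sum_range_succ_mul_choose_sub]

lemma darcaisRecurrence_expGeomCoeff (x : ℝ) :
    DArcaisRecurrence (fun k => k) x (expGeomCoeff x) := by
  rintro (_ | N)
  · simp [expGeomCoeff]
  have term (m : ℕ) : ((N + 1).choose (m + 1) : ℝ) * (x ^ (m + 2) / (m + 2)!) * ((N + 1 : ℕ) + 1)
      = x * ((N + 2).choose (m + 2) * (x ^ (m + 1) / (m + 1)!)) := by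
    have h : ((N + 2 : ℕ) : ℝ) * (N + 1).choose (m + 1) = (N + 2).choose (m + 2) * (m + 2 : ℕ) :=
      by exact_mod_cast Nat.add_one_mul_choose_eq (N + 1) (m + 1)
    have e := pow_succ_div_factorial_mul x (m + 1)
    push_cast at h e ⊢
    linear_combination (x ^ (m + 2) / (m + 2)!) * h + (N + 2).choose (m + 2) * e
  rw [sum_range_succ, Nat.sub_self, sum_range_succ_mul_expGeomCoeff, expGeomCoeff.eq_1,
    expGeomCoeff.eq_2, sum_range_succ', div_mul_eq_mul_div, eq_div_iff (by positivity), add_mul,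
    sum_mul, sum_congr rfl fun m _ => term m, ← mul_sum]
  push_cast [Nat.choose_zero_right]
  ring

lemma expGeomCoeff_succ_eq_laguerre (x : ℝ) (m : ℕ) :
    expGeomCoeff x (m + 1) = x / (m + 1) * laguerre 1 m (-x) := by
  rw [expGeomCoeff, laguerre, mul_sum]
  refine sum_congr rfl fun k hk => ?_
  have symm : (m + 1).choose (m - k) = (m + 1).choose (k + 1) :=
    Nat.choose_symm_of_eq_add (by simp at hk; omega)
  have sign : (-1 : ℝ) ^ k * (-x) ^ k = x ^ k := by rw [← mul_pow, neg_one_mul, neg_neg]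
  have h : ((m + 1 : ℕ) : ℝ) * m.choose k = (m + 1).choose (k + 1) * (k + 1 : ℕ) := by
    exact_mod_cast Nat.add_one_mul_choose_eq m k
  rw [symm, mul_right_comm, sign, Nat.factorial_succ]
  push_cast at h ⊢
  field_simp
  linear_combination x ^ (k + 1) * h

theorem darcais_ge_laguerre (x : ℝ) (hx : 0 ≤ x) (n : ℕ) (hn : 1 ≤ n) :
    P n x ≥ x / n * laguerre 1 (n - 1) (-x) := by
  obtain ⟨m, rfl⟩ := Nat.exists_eq_add_of_le' hn
  rw [ge_iff_le, Nat.add_sub_cancel, Nat.cast_succ, ← expGeomCoeff_succ_eq_laguerre]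
  exact (darcaisRecurrence_expGeomCoeff x).le (darcaisRecurrence_P x) hx (fun k => k.cast_nonneg)
    (fun k => by exact_mod_cast le_mysigma k) zero_le_one (by simp [expGeomCoeff, P]) (m + 1)
end

section
/- Let P_n(x) be the D'Arcais polynomials. For all positive integers a, b and all real x > 3, P_a(x) · P_b(x) > P_{a+b}(x). -/
lemma P_zero (x : ℝ) : P 0 x = 1 := by rw [P]

lemma P_succ (n : ℕ) (x : ℝ) :
    P (n+1) x = x / (n + 1) * ∑ k ∈ Finset.range (n + 1), (mysigma (k + 1) : ℝ) * P (n - k) x := by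
  rw [P]

lemma le_mysigma_s13 (n : ℕ) (hn : 0 < n) : n ≤ mysigma n := by
  have h : n ∈ n.divisors := Nat.mem_divisors_self n hn.ne'
  exact Finset.single_le_sum (f := fun d => d) (fun i _ => Nat.zero_le i) h

lemma mysigma_le (n : ℕ) : 2 * mysigma n ≤ n * (n+1) := by
  have hsub : n.divisors ⊆ Finset.range (n+1) := by
    intro d hd
    rw [Finset.mem_range]
    exact Nat.lt_succ_of_le (Nat.divisor_le hd)
  have h1 : mysigma n ≤ ∑ d ∈ Finset.range (n+1), d :=
    Finset.sum_le_sum_of_subset hsub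
  have h2 : (∑ d ∈ Finset.range (n+1), d) * 2 = (n+1) * n := Finset.sum_range_id_mul_two (n+1)
  rw [Nat.mul_comm (n+1) n] at h2
  omega

lemma mysigma_pos (n : ℕ) (hn : 0 < n) : 0 < mysigma n := lt_of_lt_of_le hn (le_mysigma_s13 n hn)

lemma P_pos (x : ℝ) (hx : 0 < x) : ∀ n, 0 < P n x := by
  intro n
  induction n using Nat.strong_induction_on with
  | _ n IH =>
    match n with
    | 0 => rw [P_zero]; norm_num
    | m + 1 =>
      rw [P_succ]
      apply mul_pos
      · positivity
      · apply Finset.sum_pos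
        · intro k hk
          apply mul_pos
          · exact_mod_cast mysigma_pos (k+1) (Nat.succ_pos k)
          · exact IH (m - k) (by omega)
        · exact Finset.nonempty_range_add_one

/-- The quadratic lower-bound polynomial `Q(n) = (9n² - 9n + 12)/4`. -/
noncomputable def Qr (n : ℕ) : ℝ := (9*(n:ℝ)^2 - 9*n + 12)/4

lemma Qr_pos (n : ℕ) : 0 < Qr n := by
  unfold Qr
  have h : (0:ℝ) ≤ (n:ℝ) := Nat.cast_nonneg n
  nlinarith [sq_nonneg ((n:ℝ) - 1)]

/-- The key arithmetic inequality: `σ(b+j) ≤ Q(b)·σ(j)` for `1 ≤ j ≤ b`. -/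
lemma sigma_key (b j : ℕ) (h1 : 1 ≤ j) (hjb : j ≤ b) :
    (mysigma (b+j) : ℝ) ≤ Qr b * (mysigma j : ℝ) := by
  have hup : 2 * (mysigma (b+j) : ℝ) ≤ ((b:ℝ)+j) * ((b:ℝ)+j+1) := by
    have := mysigma_le (b+j)
    have : (2 * mysigma (b+j) : ℝ) ≤ (((b+j) * (b+j+1) : ℕ) : ℝ) := by exact_mod_cast this
    push_cast at this
    linarith
  have hlo : (j:ℝ) ≤ (mysigma j : ℝ) := by exact_mod_cast le_mysigma_s13 j h1
  have hQpos : 0 < Qr b := Qr_pos b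
  have hstep : ((b:ℝ)+j) * ((b:ℝ)+j+1) ≤ 2 * Qr b * j := by
    unfold Qr
    have hj1 : (1:ℝ) ≤ (j:ℝ) := by exact_mod_cast h1
    have hjb' : (j:ℝ) ≤ (b:ℝ) := by exact_mod_cast hjb
    rcases Nat.lt_or_ge b 2 with hb | hb
    · -- then b = 1 and j = 1
      interval_cases b
      · exact absurd (h1.trans hjb) (by norm_num)
      · interval_cases j
        norm_num
    · have hb2 : (2:ℝ) ≤ (b:ℝ) := by exact_mod_cast hb
      nlinarith [mul_nonneg (sub_nonneg.2 hj1) (sub_nonneg.2 hjb'),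
        mul_nonneg (sub_nonneg.2 hj1) (sub_nonneg.2 hb2),
        mul_nonneg (mul_nonneg (sub_nonneg.2 hj1) (sub_nonneg.2 hb2))
          (le_of_lt (lt_of_lt_of_le one_pos (le_trans hj1 hjb'))),
        sq_nonneg ((b:ℝ)-1), sq_nonneg ((b:ℝ)-(j:ℝ)),
        mul_nonneg (mul_nonneg (sub_nonneg.2 hj1) (sub_nonneg.2 hb2)) (Nat.cast_nonneg b)]
  calc (mysigma (b+j) : ℝ) ≤ Qr b * j := by linarith
    _ ≤ Qr b * (mysigma j : ℝ) := mul_le_mul_of_nonneg_left hlo (le_of_lt hQpos)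

noncomputable def G (m : ℕ) : ℝ := ∑ k ∈ Finset.range m, Qr (m - k)
noncomputable def D (m : ℕ) : ℝ := ∑ k ∈ Finset.range m, ((k:ℝ)+1) * Qr (m - k)

lemma G_succ (m : ℕ) : G (m+1) = G m + Qr (m+1) := by
  unfold G
  rw [Finset.sum_range_succ' (fun k => Qr (m+1-k)) m]
  simp [Nat.succ_sub_succ]

lemma D_succ (m : ℕ) : D (m+1) = D m + G m + Qr (m+1) := by
  unfold D G
  rw [Finset.sum_range_succ' (fun k => ((k:ℝ)+1) * Qr (m+1-k)) m]
  push_cast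
  have : ∀ k ∈ Finset.range m, ((k:ℝ)+1+1) * Qr (m-k) = ((k:ℝ)+1)*Qr (m-k) + Qr (m-k) := by
    intro k hk
    ring
  rw [Finset.sum_congr rfl this, Finset.sum_add_distrib]
  ring

lemma G_closed (m : ℕ) : 4 * G m = 3*(m:ℝ)^3 + 9*m := by
  induction m with
  | zero => simp [G]
  | succ m ih =>
    rw [G_succ]
    unfold Qr
    push_cast
    push_cast at ih
    ring_nf
    ring_nf at ih
    linarith

lemma D_closed (m : ℕ) : 16 * D m = 3*(m:ℝ)*((m:ℝ)+1)*((m:ℝ)^2+(m:ℝ)+6) := by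
  induction m with
  | zero => simp [D]
  | succ m ih =>
    rw [D_succ]
    have hg := G_closed m
    unfold Qr
    push_cast
    push_cast at ih hg
    ring_nf
    ring_nf at ih hg
    linarith

/-- Lower bound: `P n x ≥ (x/3)·Q(n)` for `n ≥ 1`, `x ≥ 3`. -/
lemma LB (x : ℝ) (hx : 3 ≤ x) : ∀ n, 0 < n → x/3 * Qr n ≤ P n x := by
  intro n
  induction n using Nat.strong_induction_on with
  | _ n IH =>
    match n with
    | 0 => intro h; exact absurd h (lt_irrefl 0)
    | m + 1 =>
      intro _
      have hx0 : (0:ℝ) < x := by linarith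
      rw [P_succ, Finset.sum_range_succ]
      have hlast : ((m:ℝ)+1) ≤ (mysigma (m+1) : ℝ) * P (m - m) x := by
        simp only [Nat.sub_self, P_zero, mul_one]
        exact_mod_cast le_mysigma_s13 (m+1) (Nat.succ_pos m)
      have hterm : ∀ k ∈ Finset.range m,
          ((k:ℝ)+1) * (x/3 * Qr (m - k)) ≤ (mysigma (k+1) : ℝ) * P (m - k) x := by
        intro k hk
        rw [Finset.mem_range] at hk
        have h1 : ((k:ℝ)+1) ≤ (mysigma (k+1) : ℝ) := by
          exact_mod_cast le_mysigma_s13 (k+1) (Nat.succ_pos k)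
        have h2 : x/3 * Qr (m - k) ≤ P (m - k) x := IH (m - k) (by omega) (by omega)
        have h3 : (0:ℝ) ≤ x/3 * Qr (m - k) :=
          le_of_lt (mul_pos (by linarith) (Qr_pos _))
        exact mul_le_mul h1 h2 h3 (le_trans (by positivity) h1)
      have hsum : x/3 * D m ≤ ∑ k ∈ Finset.range m, (mysigma (k+1) : ℝ) * P (m - k) x := by
        calc x/3 * D m = ∑ k ∈ Finset.range m, ((k:ℝ)+1) * (x/3 * Qr (m - k)) := by
              unfold D; rw [Finset.mul_sum]; apply Finset.sum_congr rfl; intro k _; ring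
          _ ≤ _ := Finset.sum_le_sum hterm
      have hD0 : 0 ≤ D m := by
        apply Finset.sum_nonneg
        intro k _
        exact le_of_lt (mul_pos (by positivity) (Qr_pos _))
      have hkey : ((m:ℝ)+1) * (Qr (m+1) - 3) ≤ 3 * D m := by
        have hD := D_closed m
        have hmm2 : (0:ℝ) ≤ ((m:ℝ)-1) * ((m:ℝ)-2) := by
          rcases Nat.lt_or_ge m 2 with h | h
          · interval_cases m <;> norm_num
          · have : (2:ℝ) ≤ (m:ℝ) := by exact_mod_cast h
            nlinarith
        have hid : 16 * (((m:ℝ)+1) * (Qr (m+1) - 3)) = 36*(m:ℝ)*((m:ℝ)+1)^2 := by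
          unfold Qr; push_cast; ring
        have hnn : (0:ℝ) ≤ 9*(m:ℝ)*((m:ℝ)+1)*(((m:ℝ)-1)*((m:ℝ)-2)) := by
          have hm0 : (0:ℝ) ≤ (m:ℝ) := Nat.cast_nonneg m
          have hm1 : (0:ℝ) ≤ (m:ℝ)+1 := by linarith
          nlinarith
        nlinarith [hD, hid, hnn]
      have hm1pos : (0:ℝ) < (m:ℝ)+1 := by positivity
      have hchain : x/((m:ℝ)+1) * (x/3 * D m + ((m:ℝ)+1)) ≤
          x/((m:ℝ)+1) * (∑ k ∈ Finset.range m, (mysigma (k+1) : ℝ) * P (m - k) x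
            + (mysigma (m+1) : ℝ) * P (m - m) x) := by
        apply mul_le_mul_of_nonneg_left _ (by positivity)
        linarith
      refine le_trans ?_ hchain
      have hfac : x/((m:ℝ)+1) * (x/3 * D m + ((m:ℝ)+1)) - x/3 * Qr (m+1)
          = x/(3*((m:ℝ)+1)) * (x * D m + 3*((m:ℝ)+1) - ((m:ℝ)+1) * Qr (m+1)) := by
        field_simp
      have hxD : 3 * D m ≤ x * D m := by nlinarith
      nlinarith [hfac, mul_nonneg (le_of_lt (div_pos hx0 (by linarith : (0:ℝ) < 3*((m:ℝ)+1))))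
        (by linarith : (0:ℝ) ≤ x * D m + 3*((m:ℝ)+1) - ((m:ℝ)+1) * Qr (m+1))]

lemma Qr_lt_P (x : ℝ) (hx : 3 < x) (b : ℕ) (hb : 0 < b) : Qr b < P b x := by
  have h1 := LB x (le_of_lt hx) b hb
  have h2 : Qr b < x/3 * Qr b := by
    nlinarith [Qr_pos b]
  linarith

lemma core (x : ℝ) (hx : 3 < x) (n : ℕ)
    (IH : ∀ m, m < n → ∀ a b, 0 < a → 0 < b → a + b = m → P (a+b) x < P a x * P b x)
    (a b : ℕ) (ha : 0 < a) (hb : 0 < b) (hab : a + b = n) (hba : a ≤ b) :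
    P (a+b) x < P a x * P b x := by
  have hx0 : (0:ℝ) < x := by linarith
  obtain ⟨a', rfl⟩ : ∃ a', a = a' + 1 := ⟨a-1, by omega⟩
  obtain ⟨b', rfl⟩ : ∃ b', b = b' + 1 := ⟨b-1, by omega⟩
  set m : ℕ := a' + b' + 1 with hm
  have hind : a' + 1 + (b' + 1) = m + 1 := by omega
  have hPa : 0 < P (a'+1) x := P_pos x hx0 _
  have hPb : 0 < P (b'+1) x := P_pos x hx0 _
  have hSB : ∑ k ∈ Finset.range (b'+1), (mysigma (k+1):ℝ) * P (b'-k) x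
      = ((b':ℝ)+1) * P (b'+1) x / x := by
    rw [P_succ b']
    field_simp
  have hSA : ∑ i ∈ Finset.range (a'+1), (mysigma (i+1):ℝ) * P (a'-i) x
      = ((a':ℝ)+1) * P (a'+1) x / x := by
    rw [P_succ a']
    field_simp
  have hfirst : ∑ k ∈ Finset.range (b'+1), (mysigma (k+1):ℝ) * P (m-k) x
      ≤ P (a'+1) x * ∑ k ∈ Finset.range (b'+1), (mysigma (k+1):ℝ) * P (b'-k) x := by
    rw [Finset.mul_sum]
    apply Finset.sum_le_sum
    intro k hk
    rw [Finset.mem_range] at hk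
    have hidx : m - k = (a'+1) + (b'-k) := by omega
    rw [hidx]
    have hs : (0:ℝ) ≤ (mysigma (k+1):ℝ) := Nat.cast_nonneg _
    rcases Nat.lt_or_ge k b' with hkb | hkb
    · have hlt : P ((a'+1) + (b'-k)) x < P (a'+1) x * P (b'-k) x :=
        IH ((a'+1) + (b'-k)) (by omega) (a'+1) (b'-k) (by omega) (by omega) rfl
      nlinarith [mul_le_mul_of_nonneg_left (le_of_lt hlt) hs]
    · have h0 : b' - k = 0 := by omega
      rw [h0, P_zero, Nat.add_zero]
      exact le_of_eq (by ring)
  have hsecond : ∑ i ∈ Finset.range (a'+1), (mysigma ((b'+1)+i+1):ℝ) * P (m-((b'+1)+i)) x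
      < P (b'+1) x * ∑ i ∈ Finset.range (a'+1), (mysigma (i+1):ℝ) * P (a'-i) x := by
    rw [Finset.mul_sum]
    apply Finset.sum_lt_sum_of_nonempty Finset.nonempty_range_add_one
    intro i hi
    rw [Finset.mem_range] at hi
    have hidx : m - ((b'+1)+i) = a' - i := by omega
    rw [hidx]
    have hkey : (mysigma ((b'+1)+(i+1)):ℝ) ≤ Qr (b'+1) * (mysigma (i+1):ℝ) :=
      sigma_key (b'+1) (i+1) (Nat.succ_pos i) (by omega)
    have hQP : Qr (b'+1) < P (b'+1) x := Qr_lt_P x hx (b'+1) (Nat.succ_pos b')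
    have hsp : (0:ℝ) < (mysigma (i+1):ℝ) := by exact_mod_cast mysigma_pos (i+1) (Nat.succ_pos i)
    have hPp : 0 < P (a'-i) x := P_pos x hx0 _
    have h1 : (mysigma ((b'+1)+i+1):ℝ) < P (b'+1) x * (mysigma (i+1):ℝ) := by
      have he : (b'+1)+i+1 = (b'+1)+(i+1) := by omega
      rw [he]
      calc (mysigma ((b'+1)+(i+1)):ℝ) ≤ Qr (b'+1) * (mysigma (i+1):ℝ) := hkey
        _ < P (b'+1) x * (mysigma (i+1):ℝ) := mul_lt_mul_of_pos_right hQP hsp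
    calc (mysigma ((b'+1)+i+1):ℝ) * P (a'-i) x
        < (P (b'+1) x * (mysigma (i+1):ℝ)) * P (a'-i) x := mul_lt_mul_of_pos_right h1 hPp
      _ = P (b'+1) x * ((mysigma (i+1):ℝ) * P (a'-i) x) := by ring
  rw [hind, P_succ]
  have hsplit : ∑ k ∈ Finset.range (m+1), (mysigma (k+1):ℝ) * P (m-k) x
      = ∑ k ∈ Finset.range (b'+1), (mysigma (k+1):ℝ) * P (m-k) x
        + ∑ i ∈ Finset.range (a'+1), (mysigma ((b'+1)+i+1):ℝ) * P (m-((b'+1)+i)) x := by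
    have hr : m + 1 = (b'+1) + (a'+1) := by omega
    rw [hr, Finset.sum_range_add]
  rw [hsplit]
  have htot : ∑ k ∈ Finset.range (b'+1), (mysigma (k+1):ℝ) * P (m-k) x
      + ∑ i ∈ Finset.range (a'+1), (mysigma ((b'+1)+i+1):ℝ) * P (m-((b'+1)+i)) x
      < ((m:ℝ)+1) * (P (a'+1) x * P (b'+1) x) / x := by
    have e1 : P (a'+1) x * (((b':ℝ)+1) * P (b'+1) x / x)
        + P (b'+1) x * (((a':ℝ)+1) * P (a'+1) x / x)
        = ((m:ℝ)+1) * (P (a'+1) x * P (b'+1) x) / x := by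
      have he : ((m:ℝ)+1) = ((a':ℝ)+1) + ((b':ℝ)+1) := by
        rw [hm]; push_cast; ring
      rw [he]; field_simp; ring
    rw [← e1]
    rw [hSB] at hfirst
    rw [hSA] at hsecond
    linarith
  have hmpos : (0:ℝ) < (m:ℝ)+1 := by positivity
  calc x/((m:ℝ)+1) * (∑ k ∈ Finset.range (b'+1), (mysigma (k+1):ℝ) * P (m-k) x
        + ∑ i ∈ Finset.range (a'+1), (mysigma ((b'+1)+i+1):ℝ) * P (m-((b'+1)+i)) x)
      < x/((m:ℝ)+1) * (((m:ℝ)+1) * (P (a'+1) x * P (b'+1) x) / x) :=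
        mul_lt_mul_of_pos_left htot (by positivity)
    _ = P (a'+1) x * P (b'+1) x := by field_simp

theorem BO_aux (x : ℝ) (hx : 3 < x) :
    ∀ n, ∀ a b, 0 < a → 0 < b → a + b = n → P (a+b) x < P a x * P b x := by
  intro n
  induction n using Nat.strong_induction_on with
  | _ n IH =>
    intro a b ha hb hab
    rcases le_total a b with h | h
    · exact core x hx n IH a b ha hb hab h
    · have hc := core x hx n IH b a hb ha (by omega) h
      rw [Nat.add_comm b a] at hc
      rw [mul_comm] at hc
      exact hc

theorem darcais_BO_gt_three (a b : ℕ) (ha : 0 < a) (hb : 0 < b) (x : ℝ) (hx : 3 < x) :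
    P a x * P b x > P (a + b) x :=
  BO_aux x hx (a+b) a b ha hb rfl
end
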